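/- The saved-nodes objective function σ is in general neither submodular nor supermodular: there exists a graph, infected set, and sets A ⊆ B of vaccinated vertices and a vertex v ∉ B such that the marginal gain σ(A∪{v}) − σ(A) is strictly less than σ(B∪{v}) − σ(B), and another instance where the inequality is reversed. -/
import Mathlib


section

variable {V : Type*}

/-- A vertex `v` is infected in the topology with edge relation `E`, infected
seed set `𝓘` and vaccinated set `S`, if `v` is not vaccinated and is reachable
from `𝓘` via a directed path avoiding the vaccinated set. -/
def Infected (E : V → V → Prop) (𝓘 S : Set V) (v : V) : Prop :=
  v ∉ S ∧ ∃ a ∈ 𝓘, Relation.ReflTransGen (fun x y => E x y ∧ x ∉ S ∧ y ∉ S) a v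

/-- `saved E 𝓘 S` is the number of vertices not reachable from `𝓘` via paths
avoiding the vaccinated set `S` (the number of saved vertices). -/
noncomputable def saved [Fintype V] (E : V → V → Prop) (𝓘 S : Set V) : ℕ :=
  Set.ncard {v | ¬ Infected E 𝓘 S v}

end

lemma infected_mem {V : Type*} {E : V → V → Prop} {𝓘 S T : Set V}
    (h𝓘 : ∀ a ∈ 𝓘, a ∉ S → a ∈ T)
    (hcl : ∀ x y, x ∈ T → E x y → y ∉ S → y ∈ T) :
    ∀ v, Infected E 𝓘 S v → v ∈ T := by
  rintro v ⟨hvS, a, ha, hpath⟩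
  revert hvS
  induction hpath with
  | refl => exact fun h => h𝓘 a ha h
  | tail _ hbc ih => exact fun h => hcl _ _ (ih hbc.2.1) hbc.1 h

lemma saved_eq {V : Type*} [Fintype V] [DecidableEq V] (E : V → V → Prop) (𝓘 S : Set V)
    (I : Finset V) (hchar : ∀ v, Infected E 𝓘 S v ↔ v ∈ I) :
    saved E 𝓘 S = Iᶜ.card := by
  unfold saved
  have h : {v | ¬ Infected E 𝓘 S v} = ↑(Iᶜ) := by
    ext v; simp [hchar]
  rw [h, Set.ncard_coe_finset]

/-- Graph for the submodularity counterexample: `0 → 1 → 3`, `0 → 2 → 3`. -/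
def E1 : Fin 4 → Fin 4 → Prop := fun x y =>
  (x = 0 ∧ y = 1) ∨ (x = 0 ∧ y = 2) ∨ (x = 1 ∧ y = 3) ∨ (x = 2 ∧ y = 3)

lemma char1a : ∀ v, Infected E1 {0} (∅ : Set (Fin 4)) v ↔ v ∈ ({0,1,2,3} : Finset (Fin 4)) := by
  intro v
  constructor
  · intro h
    exact infected_mem (T := ↑({0,1,2,3} : Finset (Fin 4)))
      (by rintro a rfl _; simp)
      (by intro x y hx hxy hy
          simp only [Finset.coe_insert, Set.mem_insert_iff, Finset.coe_singleton,
            Set.mem_singleton_iff] at hx ⊢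
          rcases hxy with ⟨rfl, rfl⟩ | ⟨rfl, rfl⟩ | ⟨rfl, rfl⟩ | ⟨rfl, rfl⟩ <;> simp_all) v h
  · intro hv
    fin_cases hv
    · exact ⟨by simp, 0, rfl, .refl⟩
    · exact ⟨by simp, 0, rfl, .single ⟨Or.inl ⟨rfl, rfl⟩, by simp, by simp⟩⟩
    · exact ⟨by simp, 0, rfl, .single ⟨Or.inr (Or.inl ⟨rfl, rfl⟩), by simp, by simp⟩⟩
    · exact ⟨by simp, 0, rfl, .tail (.single ⟨Or.inl ⟨rfl, rfl⟩, by simp, by simp⟩)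
        ⟨Or.inr (Or.inr (Or.inl ⟨rfl, rfl⟩)), by simp, by simp⟩⟩

lemma char1b : ∀ v, Infected E1 {0} ({1} : Set (Fin 4)) v ↔ v ∈ ({0,2,3} : Finset (Fin 4)) := by
  intro v
  constructor
  · intro h
    exact infected_mem (T := ↑({0,2,3} : Finset (Fin 4)))
      (by rintro a rfl _; simp)
      (by intro x y hx hxy hy
          simp only [Finset.coe_insert, Set.mem_insert_iff, Finset.coe_singleton,
            Set.mem_singleton_iff] at hx ⊢
          rcases hxy with ⟨rfl, rfl⟩ | ⟨rfl, rfl⟩ | ⟨rfl, rfl⟩ | ⟨rfl, rfl⟩ <;> simp_all) v h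
  · intro hv
    fin_cases hv
    · exact ⟨by simp, 0, rfl, .refl⟩
    · exact ⟨by simp, 0, rfl, .single ⟨Or.inr (Or.inl ⟨rfl, rfl⟩), by simp, by simp⟩⟩
    · exact ⟨by simp, 0, rfl, .tail (.single ⟨Or.inr (Or.inl ⟨rfl, rfl⟩), by simp, by simp⟩)
        ⟨Or.inr (Or.inr (Or.inr ⟨rfl, rfl⟩)), by simp, by simp⟩⟩

lemma char1c : ∀ v, Infected E1 {0} ({2} : Set (Fin 4)) v ↔ v ∈ ({0,1,3} : Finset (Fin 4)) := by
  intro v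
  constructor
  · intro h
    exact infected_mem (T := ↑({0,1,3} : Finset (Fin 4)))
      (by rintro a rfl _; simp)
      (by intro x y hx hxy hy
          simp only [Finset.coe_insert, Set.mem_insert_iff, Finset.coe_singleton,
            Set.mem_singleton_iff] at hx ⊢
          rcases hxy with ⟨rfl, rfl⟩ | ⟨rfl, rfl⟩ | ⟨rfl, rfl⟩ | ⟨rfl, rfl⟩ <;> simp_all) v h
  · intro hv
    fin_cases hv
    · exact ⟨by simp, 0, rfl, .refl⟩
    · exact ⟨by simp, 0, rfl, .single ⟨Or.inl ⟨rfl, rfl⟩, by simp, by simp⟩⟩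
    · exact ⟨by simp, 0, rfl, .tail (.single ⟨Or.inl ⟨rfl, rfl⟩, by simp, by simp⟩)
        ⟨Or.inr (Or.inr (Or.inl ⟨rfl, rfl⟩)), by simp, by simp⟩⟩

lemma char1d : ∀ v, Infected E1 {0} (({2} : Set (Fin 4)) ∪ {1}) v ↔ v ∈ ({0} : Finset (Fin 4)) := by
  intro v
  constructor
  · intro h
    exact infected_mem (T := ↑({0} : Finset (Fin 4)))
      (by rintro a rfl _; simp)
      (by intro x y hx hxy hy
          simp only [Finset.coe_singleton, Set.mem_singleton_iff] at hx ⊢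
          rcases hxy with ⟨rfl, rfl⟩ | ⟨rfl, rfl⟩ | ⟨rfl, rfl⟩ | ⟨rfl, rfl⟩ <;> simp_all) v h
  · intro hv
    fin_cases hv
    exact ⟨by simp, 0, rfl, .refl⟩

/-- Graph for the supermodularity counterexample: the path `0 → 1 → 2`. -/
def E2 : Fin 3 → Fin 3 → Prop := fun x y => (x = 0 ∧ y = 1) ∨ (x = 1 ∧ y = 2)

lemma char2a : ∀ v, Infected E2 {0} (∅ : Set (Fin 3)) v ↔ v ∈ ({0,1,2} : Finset (Fin 3)) := by
  intro v
  constructor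
  · intro h
    exact infected_mem (T := ↑({0,1,2} : Finset (Fin 3)))
      (by rintro a rfl _; simp)
      (by intro x y hx hxy hy
          simp only [Finset.coe_insert, Set.mem_insert_iff, Finset.coe_singleton,
            Set.mem_singleton_iff] at hx ⊢
          rcases hxy with ⟨rfl, rfl⟩ | ⟨rfl, rfl⟩ <;> simp_all) v h
  · intro hv
    fin_cases hv
    · exact ⟨by simp, 0, rfl, .refl⟩
    · exact ⟨by simp, 0, rfl, .single ⟨Or.inl ⟨rfl, rfl⟩, by simp, by simp⟩⟩
    · exact ⟨by simp, 0, rfl, .tail (.single ⟨Or.inl ⟨rfl, rfl⟩, by simp, by simp⟩)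
        ⟨Or.inr ⟨rfl, rfl⟩, by simp, by simp⟩⟩

lemma char2b : ∀ v, Infected E2 {0} ({2} : Set (Fin 3)) v ↔ v ∈ ({0,1} : Finset (Fin 3)) := by
  intro v
  constructor
  · intro h
    exact infected_mem (T := ↑({0,1} : Finset (Fin 3)))
      (by rintro a rfl _; simp)
      (by intro x y hx hxy hy
          simp only [Finset.coe_insert, Set.mem_insert_iff, Finset.coe_singleton,
            Set.mem_singleton_iff] at hx ⊢
          rcases hxy with ⟨rfl, rfl⟩ | ⟨rfl, rfl⟩ <;> simp_all) v h
  · intro hv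
    fin_cases hv
    · exact ⟨by simp, 0, rfl, .refl⟩
    · exact ⟨by simp, 0, rfl, .single ⟨Or.inl ⟨rfl, rfl⟩, by simp, by simp⟩⟩

lemma char2c : ∀ v, Infected E2 {0} ({1} : Set (Fin 3)) v ↔ v ∈ ({0} : Finset (Fin 3)) := by
  intro v
  constructor
  · intro h
    exact infected_mem (T := ↑({0} : Finset (Fin 3)))
      (by rintro a rfl _; simp)
      (by intro x y hx hxy hy
          simp only [Finset.coe_singleton, Set.mem_singleton_iff] at hx ⊢
          rcases hxy with ⟨rfl, rfl⟩ | ⟨rfl, rfl⟩ <;> simp_all) v h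
  · intro hv
    fin_cases hv
    exact ⟨by simp, 0, rfl, .refl⟩

lemma char2d : ∀ v, Infected E2 {0} (({1} : Set (Fin 3)) ∪ {2}) v ↔ v ∈ ({0} : Finset (Fin 3)) := by
  intro v
  constructor
  · intro h
    exact infected_mem (T := ↑({0} : Finset (Fin 3)))
      (by rintro a rfl _; simp)
      (by intro x y hx hxy hy
          simp only [Finset.coe_singleton, Set.mem_singleton_iff] at hx ⊢
          rcases hxy with ⟨rfl, rfl⟩ | ⟨rfl, rfl⟩ <;> simp_all) v h
  · intro hv
    fin_cases hv
    exact ⟨by simp, 0, rfl, .refl⟩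

/-- The saved-nodes objective `σ` is in general neither submodular nor
supermodular: there is an instance where the marginal gain on a smaller set is
strictly smaller than on a larger set, and another instance where it is strictly
larger. -/
theorem saved_neither_submodular_nor_supermodular :
    (∃ (V : Type) (_ : Fintype V) (E : V → V → Prop) (𝓘 A B : Set V) (v : V),
      A ⊆ B ∧ v ∉ B ∧
      (saved E 𝓘 (A ∪ {v}) : ℤ) - saved E 𝓘 A
        < (saved E 𝓘 (B ∪ {v}) : ℤ) - saved E 𝓘 B) ∧
    (∃ (V : Type) (_ : Fintype V) (E : V → V → Prop) (𝓘 A B : Set V) (v : V),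
      A ⊆ B ∧ v ∉ B ∧
      (saved E 𝓘 (A ∪ {v}) : ℤ) - saved E 𝓘 A
        > (saved E 𝓘 (B ∪ {v}) : ℤ) - saved E 𝓘 B) := by
  constructor
  · refine ⟨Fin 4, inferInstance, E1, {0}, ∅, {2}, 1, Set.empty_subset _, by simp, ?_⟩
    have hA : saved E1 {0} (∅ : Set (Fin 4)) = 0 := by
      rw [saved_eq _ _ _ _ char1a]; decide
    have hAv : saved E1 {0} ((∅ : Set (Fin 4)) ∪ {1}) = 1 := by
      rw [Set.empty_union, saved_eq _ _ _ _ char1b]; decide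
    have hB : saved E1 {0} ({2} : Set (Fin 4)) = 1 := by
      rw [saved_eq _ _ _ _ char1c]; decide
    have hBv : saved E1 {0} (({2} : Set (Fin 4)) ∪ {1}) = 3 := by
      rw [saved_eq _ _ _ _ char1d]; decide
    rw [hA, hAv, hB, hBv]; norm_num
  · refine ⟨Fin 3, inferInstance, E2, {0}, ∅, {1}, 2, Set.empty_subset _, by simp, ?_⟩
    have hA : saved E2 {0} (∅ : Set (Fin 3)) = 0 := by
      rw [saved_eq _ _ _ _ char2a]; decide
    have hAv : saved E2 {0} ((∅ : Set (Fin 3)) ∪ {2}) = 1 := by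
      rw [Set.empty_union, saved_eq _ _ _ _ char2b]; decide
    have hB : saved E2 {0} ({1} : Set (Fin 3)) = 2 := by
      rw [saved_eq _ _ _ _ char2c]; decide
    have hBv : saved E2 {0} (({1} : Set (Fin 3)) ∪ {2}) = 2 := by
      rw [saved_eq _ _ _ _ char2d]; decide
    rw [hA, hAv, hB, hBv]; norm_num
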